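/- Let n ≥ 3 and let Ω ⊂ ℝⁿ be a nonempty connected open set. Then the real vector space { v : Ω → ℝⁿ smooth : dev sym Grad v = 0 on Ω } (the kernel of dev sym Grad, i.e. the space of conformal Killing vector fields on Ω) has finite dimension equal to (n+1)(n+2)/2. -/

import Mathlib

open MeasureTheory Real Matrix

attribute [local instance] Matrix.frobeniusNormedAddCommGroup Matrix.frobeniusNormedSpace

noncomputable section

/-- Deviatoric (trace-free) part of a square matrix. -/
def dev {n : ℕ} (X : Matrix (Fin n) (Fin n) ℝ) : Matrix (Fin n) (Fin n) ℝ :=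
  X - (Matrix.trace X / (n : ℝ)) • (1 : Matrix (Fin n) (Fin n) ℝ)

/-- Symmetric part of a square matrix. -/
def symP {n : ℕ} (X : Matrix (Fin n) (Fin n) ℝ) : Matrix (Fin n) (Fin n) ℝ :=
  (1 / 2 : ℝ) • (X + Xᵀ)

/-- Squared Frobenius norm. -/
def frobSq {n : ℕ} (X : Matrix (Fin n) (Fin n) ℝ) : ℝ := ∑ i, ∑ j, (X i j) ^ 2

/-- Frobenius norm. -/
def frobN {n : ℕ} (X : Matrix (Fin n) (Fin n) ℝ) : ℝ := Real.sqrt (frobSq X)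

/-- Partial derivative ∂ⱼ f at x. -/
def pd {n : ℕ} (j : Fin n) (f : (Fin n → ℝ) → ℝ) (x : Fin n → ℝ) : ℝ :=
  fderiv ℝ f x (Pi.single j 1)

/-- Row-wise divergence of a tensor field: (Div T)ᵢ = Σⱼ ∂ⱼ Tᵢⱼ. -/
def divT {n : ℕ} (T : (Fin n → ℝ) → Matrix (Fin n) (Fin n) ℝ) (x : Fin n → ℝ) :
    Fin n → ℝ :=
  fun i => ∑ j, pd j (fun y => T y i j) x

/-- Row-wise rotation (curl) of a 3×3 tensor field. -/
def curl3 (T : (Fin 3 → ℝ) → Matrix (Fin 3) (Fin 3) ℝ) (x : Fin 3 → ℝ) :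
    Matrix (Fin 3) (Fin 3) ℝ :=
  Matrix.of fun i =>
    ![pd 1 (fun y => T y i 2) x - pd 2 (fun y => T y i 1) x,
      pd 2 (fun y => T y i 0) x - pd 0 (fun y => T y i 2) x,
      pd 0 (fun y => T y i 1) x - pd 1 (fun y => T y i 0) x]

/-- Jacobian matrix of a vector field: (Grad v)ᵢⱼ = ∂ⱼ vᵢ. -/
def gradM {n : ℕ} (v : (Fin n → ℝ) → (Fin n → ℝ)) (x : Fin n → ℝ) :
    Matrix (Fin n) (Fin n) ℝ :=
  Matrix.of fun i j => pd j (fun y => v y i) x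


namespace CKaux

variable {n : ℕ}

/-! ### pd calculus -/

lemma pd_congr_nhds {j : Fin n} {f g : (Fin n → ℝ) → ℝ} {x : Fin n → ℝ}
    (h : f =ᶠ[nhds x] g) : pd j f x = pd j g x := by
  unfold pd; rw [h.fderiv_eq]

lemma pd_congr_on {Ω : Set (Fin n → ℝ)} (ho : IsOpen Ω) {j : Fin n}
    {f g : (Fin n → ℝ) → ℝ} {x : Fin n → ℝ} (hx : x ∈ Ω) (h : ∀ y ∈ Ω, f y = g y) :
    pd j f x = pd j g x :=
  pd_congr_nhds (Filter.eventuallyEq_of_mem (ho.mem_nhds hx) h)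

lemma pd_add {j : Fin n} {f g : (Fin n → ℝ) → ℝ} {x : Fin n → ℝ}
    (hf : DifferentiableAt ℝ f x) (hg : DifferentiableAt ℝ g x) :
    pd j (fun y => f y + g y) x = pd j f x + pd j g x := by
  unfold pd; rw [fderiv_fun_add hf hg]; rfl

lemma pd_sub {j : Fin n} {f g : (Fin n → ℝ) → ℝ} {x : Fin n → ℝ}
    (hf : DifferentiableAt ℝ f x) (hg : DifferentiableAt ℝ g x) :
    pd j (fun y => f y - g y) x = pd j f x - pd j g x := by
  unfold pd; rw [fderiv_fun_sub hf hg]; rfl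

lemma pd_const {j : Fin n} {x : Fin n → ℝ} (c : ℝ) : pd j (fun _ => c) x = 0 := by
  unfold pd; rw [fderiv_fun_const]; rfl

lemma pd_mul {j : Fin n} {f g : (Fin n → ℝ) → ℝ} {x : Fin n → ℝ}
    (hf : DifferentiableAt ℝ f x) (hg : DifferentiableAt ℝ g x) :
    pd j (fun y => f y * g y) x = f x * pd j g x + pd j f x * g x := by
  unfold pd; rw [fderiv_fun_mul hf hg]
  simp [mul_comm]

lemma pd_const_mul {j : Fin n} {f : (Fin n → ℝ) → ℝ} {x : Fin n → ℝ}
    (hf : DifferentiableAt ℝ f x) (c : ℝ) :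
    pd j (fun y => c * f y) x = c * pd j f x := by
  unfold pd; rw [fderiv_const_mul hf]; rfl

lemma pd_sum {j : Fin n} {ι : Type*} {s : Finset ι} {F : ι → (Fin n → ℝ) → ℝ}
    {x : Fin n → ℝ} (h : ∀ i ∈ s, DifferentiableAt ℝ (F i) x) :
    pd j (fun y => ∑ i ∈ s, F i y) x = ∑ i ∈ s, pd j (F i) x := by
  unfold pd; rw [fderiv_fun_sum h]; simp

lemma pd_coord {j m : Fin n} {x : Fin n → ℝ} :
    pd j (fun y => y m) x = if m = j then 1 else 0 := by
  have : (fun y : Fin n → ℝ => y m) = (ContinuousLinearMap.proj m : (Fin n → ℝ) →L[ℝ] ℝ) := rfl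
  unfold pd
  rw [this, ContinuousLinearMap.fderiv]
  simp [Pi.single_apply]

/-! ### Model fields -/

def dotp (c y : Fin n → ℝ) : ℝ := ∑ m, c m * y m
def sq2 (y : Fin n → ℝ) : ℝ := ∑ m, y m ^ 2
def confQ (c : Fin n → ℝ) (y : Fin n → ℝ) (k : Fin n) : ℝ :=
  dotp c y * y k - (1 / 2) * sq2 y * c k
def rotF (i j : Fin n) (y : Fin n → ℝ) (k : Fin n) : ℝ :=
  (if k = i then y j else 0) - (if k = j then y i else 0)

lemma contDiff_coord (m : Fin n) : ContDiff ℝ (⊤ : ℕ∞) (fun y : Fin n → ℝ => y m) := by fun_prop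
lemma contDiff_dotp (c : Fin n → ℝ) : ContDiff ℝ (⊤ : ℕ∞) (fun y : Fin n → ℝ => dotp c y) :=
  ContDiff.sum fun m _ => by fun_prop
lemma contDiff_sq2 : ContDiff ℝ (⊤ : ℕ∞) (fun y : Fin n → ℝ => sq2 y) :=
  ContDiff.sum fun m _ => by fun_prop
lemma contDiff_confQ (c : Fin n → ℝ) (k : Fin n) :
    ContDiff ℝ (⊤ : ℕ∞) (fun y : Fin n → ℝ => confQ c y k) :=
  ((contDiff_dotp c).mul (contDiff_coord k)).sub
    ((contDiff_const.mul contDiff_sq2).mul contDiff_const)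

@[fun_prop] lemma diff_dotp (c x : Fin n → ℝ) :
    DifferentiableAt ℝ (fun y : Fin n → ℝ => dotp c y) x :=
  ((contDiff_dotp c).differentiable (by simp)).differentiableAt
@[fun_prop] lemma diff_sq2 (x : Fin n → ℝ) :
    DifferentiableAt ℝ (fun y : Fin n → ℝ => sq2 y) x :=
  (contDiff_sq2.differentiable (by simp)).differentiableAt
@[fun_prop] lemma diff_confQ (c x : Fin n → ℝ) (k : Fin n) :
    DifferentiableAt ℝ (fun y : Fin n → ℝ => confQ c y k) x :=
  ((contDiff_confQ c k).differentiable (by simp)).differentiableAt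
lemma diff_coord (x : Fin n → ℝ) (m : Fin n) :
    DifferentiableAt ℝ (fun y : Fin n → ℝ => y m) x :=
  ((contDiff_coord m).differentiable (by simp)).differentiableAt

lemma pd_dotp (c x : Fin n → ℝ) (j : Fin n) : pd j (fun y => dotp c y) x = c j := by
  unfold dotp
  rw [pd_sum (fun m _ => by fun_prop)]
  have : ∀ m : Fin n, pd j (fun y : Fin n → ℝ => c m * y m) x
      = c m * (if m = j then 1 else 0) := by
    intro m
    rw [pd_const_mul (diff_coord x m), pd_coord]
  simp only [this, mul_ite, mul_one, mul_zero]
  simp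

lemma pd_sq2 (x : Fin n → ℝ) (j : Fin n) : pd j (fun y => sq2 y) x = 2 * x j := by
  unfold sq2
  rw [pd_sum (fun m _ => by fun_prop)]
  have : ∀ m : Fin n, pd j (fun y : Fin n → ℝ => y m ^ 2) x
      = 2 * x m * (if m = j then 1 else 0) := by
    intro m
    have h1 : (fun y : Fin n → ℝ => y m ^ 2) = fun y => y m * y m := by funext y; ring
    rw [h1, pd_mul (diff_coord x m) (diff_coord x m), pd_coord]
    ring
  simp only [this, mul_ite, mul_one, mul_zero]
  simp

lemma pd_confQ (c x : Fin n → ℝ) (k j : Fin n) :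
    pd j (fun y => confQ c y k) x
      = c j * x k + dotp c x * (if k = j then 1 else 0) - x j * c k := by
  unfold confQ
  rw [pd_sub (by fun_prop) (by fun_prop),
    pd_mul (diff_dotp c x) (diff_coord x k), pd_dotp, pd_coord]
  have : (fun y : Fin n → ℝ => 1 / 2 * sq2 y * c k) = fun y => (c k / 2) * sq2 y := by
    funext y; ring
  rw [this, pd_const_mul (diff_sq2 x), pd_sq2]
  ring

lemma contDiff_pd_confQ (c : Fin n → ℝ) (k j : Fin n) :
    ContDiff ℝ (⊤ : ℕ∞) (fun y : Fin n → ℝ => pd j (fun z => confQ c z k) y) := by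
  have : (fun y : Fin n → ℝ => pd j (fun z => confQ c z k) y)
      = fun y => c j * y k + dotp c y * (if k = j then 1 else 0) - y j * c k := by
    funext y; exact pd_confQ c y k j
  rw [this]
  exact ((contDiff_const.mul (contDiff_coord k)).add
    ((contDiff_dotp c).mul contDiff_const)).sub ((contDiff_coord j).mul contDiff_const)

lemma pd_pd_confQ (c x : Fin n → ℝ) (k i j : Fin n) :
    pd i (fun y => pd j (fun z => confQ c z k) y) x
      = c i * (if k = j then 1 else 0) + c j * (if k = i then 1 else 0)
        - c k * (if i = j then 1 else 0) := by
  have h : (fun y : Fin n → ℝ => pd j (fun z => confQ c z k) y)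
      = fun y => c j * y k + dotp c y * (if k = j then 1 else 0) - y j * c k := by
    funext y; exact pd_confQ c y k j
  rw [h, pd_sub (by fun_prop) (by fun_prop),
    pd_add (by fun_prop) (by fun_prop),
    pd_const_mul (diff_coord x k)]
  have h2 : (fun y : Fin n → ℝ => dotp c y * (if k = j then 1 else 0))
      = fun y => (if k = j then (1:ℝ) else 0) * dotp c y := by funext y; ring
  have h3 : (fun y : Fin n → ℝ => y j * c k) = fun y => c k * y j := by funext y; ring
  rw [h2, h3, pd_const_mul (diff_dotp c x), pd_const_mul (diff_coord x j),
    pd_dotp, pd_coord, pd_coord]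
  have : ((if j = i then (1:ℝ) else 0) = if i = j then 1 else 0) := by
    by_cases h : i = j <;> simp [h]; exact fun hh => h hh.symm
  rw [this]; ring

lemma pd_if_coord {P : Prop} [Decidable P] (x : Fin n → ℝ) (a m : Fin n) :
    pd m (fun y => if P then y a else 0) x
      = if P then (if a = m then (1:ℝ) else 0) else 0 := by
  split
  · exact pd_coord
  · exact pd_const 0

lemma pd_rotF (i j : Fin n) (x : Fin n → ℝ) (k m : Fin n) :
    pd m (fun y => rotF i j y k) x
      = (if k = i then if j = m then (1:ℝ) else 0 else 0)
        - (if k = j then if i = m then (1:ℝ) else 0 else 0) := by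
  unfold rotF
  rw [pd_sub, pd_if_coord, pd_if_coord]
  · split
    · exact diff_coord x _
    · exact differentiableAt_const 0
  · split
    · exact diff_coord x _
    · exact differentiableAt_const 0

lemma dotp_add_smul (a b z : Fin n → ℝ) (t : ℝ) :
    dotp a (b + t • z) = dotp a b + t * dotp a z := by
  unfold dotp
  rw [Finset.mul_sum, ← Finset.sum_add_distrib]
  refine Finset.sum_congr rfl fun m _ => ?_
  simp only [Pi.add_apply, Pi.smul_apply, smul_eq_mul]; ring

lemma sq2_add_smul (x z : Fin n → ℝ) (t : ℝ) :
    sq2 (x + t • z) = sq2 x + 2 * t * dotp x z + t ^ 2 * sq2 z := by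
  unfold sq2 dotp
  rw [Finset.mul_sum, Finset.mul_sum, ← Finset.sum_add_distrib, ← Finset.sum_add_distrib]
  refine Finset.sum_congr rfl fun m _ => ?_
  simp only [Pi.add_apply, Pi.smul_apply, smul_eq_mul]; ring

lemma confQ_expand (c x z : Fin n → ℝ) (t : ℝ) (k : Fin n) :
    confQ c (x + t • z) k
      = confQ c x k
        + t * (dotp c z * x k + dotp c x * z k - dotp x z * c k)
        + t ^ 2 * confQ c z k := by
  unfold confQ
  rw [dotp_add_smul, sq2_add_smul]
  have hx : (x + t • z) k = x k + t * z k := by simp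
  rw [hx]
  ring

/-! ### Analysis on open sets -/

variable {Ω : Set (Fin n → ℝ)}

lemma diffAt_of_contDiffOn (ho : IsOpen Ω) {f : (Fin n → ℝ) → ℝ} (hf : ContDiffOn ℝ (⊤ : ℕ∞) f Ω)
    {x : Fin n → ℝ} (hx : x ∈ Ω) : DifferentiableAt ℝ f x :=
  (hf.contDiffAt (ho.mem_nhds hx)).differentiableAt (by simp)

lemma contDiffOn_pd (ho : IsOpen Ω) {f : (Fin n → ℝ) → ℝ} (hf : ContDiffOn ℝ (⊤ : ℕ∞) f Ω) (j : Fin n) :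
    ContDiffOn ℝ (⊤ : ℕ∞) (fun x => pd j f x) Ω := by
  have h1 : ContDiffOn ℝ (⊤ : ℕ∞) (fun x => fderiv ℝ f x) Ω := hf.fderiv_of_isOpen ho (by simp)
  exact h1.clm_apply contDiffOn_const

lemma single_eq_smul (j : Fin n) (t : ℝ) : Pi.single j t = t • (Pi.single j 1 : Fin n → ℝ) := by
  funext m
  by_cases h : m = j <;> simp [Pi.single_apply, h]

lemma fderiv_eq_zero_of_pd_zero {f : (Fin n → ℝ) → ℝ} {x : Fin n → ℝ}
    (hd : DifferentiableAt ℝ f x) (hz : ∀ j, pd j f x = 0) : fderiv ℝ f x = 0 := by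
  clear hd
  apply ContinuousLinearMap.ext
  intro ξ
  have hξ : ξ = ∑ j, Pi.single j (ξ j) := (Finset.univ_sum_single ξ).symm
  rw [hξ, map_sum]
  rw [Finset.sum_eq_zero]
  · rfl
  · intro j _
    rw [single_eq_smul j (ξ j), (fderiv ℝ f x).map_smul]
    have := hz j
    unfold pd at this
    rw [this, smul_zero]

lemma const_on (ho : IsOpen Ω) (hconn : IsPreconnected Ω) {f : (Fin n → ℝ) → ℝ}
    (hd : ∀ x ∈ Ω, DifferentiableAt ℝ f x) (hz : ∀ x ∈ Ω, ∀ j, pd j f x = 0)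
    {x y : Fin n → ℝ} (hx : x ∈ Ω) (hy : y ∈ Ω) : f x = f y := by
  have hf0 : ∀ z ∈ Ω, fderiv ℝ f z = 0 := fun z hz' =>
    fderiv_eq_zero_of_pd_zero (hd z hz') (hz z hz')
  have hball : ∀ (z : Fin n → ℝ) (ε : ℝ), 0 < ε → Metric.ball z ε ⊆ Ω →
      ∀ w ∈ Metric.ball z ε, f w = f z := by
    intro z ε hε hsub w hw
    refine (convex_ball z ε).is_const_of_fderivWithin_eq_zero
      (fun p hp => (hd p (hsub hp)).differentiableWithinAt) ?_ hw (Metric.mem_ball_self hε)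
    intro p hp
    rw [fderivWithin_of_isOpen Metric.isOpen_ball hp]
    exact hf0 p (hsub hp)
  haveI : PreconnectedSpace ↥Ω := Subtype.preconnectedSpace hconn
  have hloc : IsLocallyConstant (fun p : ↥Ω => f ↑p) := by
    rw [IsLocallyConstant.iff_exists_open]
    rintro ⟨z, hz'⟩
    obtain ⟨ε, hε, hsub⟩ := Metric.isOpen_iff.mp ho z hz'
    refine ⟨Subtype.val ⁻¹' Metric.ball z ε, Metric.isOpen_ball.preimage continuous_subtype_val,
      Metric.mem_ball_self hε, ?_⟩
    rintro ⟨w, hw'⟩ hw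
    exact hball z ε hε hsub w hw
  exact hloc.apply_eq_of_isPreconnected isPreconnected_univ (x := ⟨x, hx⟩) (y := ⟨y, hy⟩)
    trivial trivial

lemma pd_comm (ho : IsOpen Ω) {f : (Fin n → ℝ) → ℝ} (hf : ContDiffOn ℝ (⊤ : ℕ∞) f Ω)
    {x : Fin n → ℝ} (hx : x ∈ Ω) (i j : Fin n) :
    pd i (fun y => pd j f y) x = pd j (fun y => pd i f y) x := by
  have hev : ∀ᶠ y in nhds x, HasFDerivAt f (fderiv ℝ f y) y :=
    Filter.eventually_of_mem (ho.mem_nhds hx)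
      (fun y hy => (diffAt_of_contDiffOn ho hf hy).hasFDerivAt)
  have hdf : DifferentiableAt ℝ (fun y => fderiv ℝ f y) x :=
    ((hf.fderiv_of_isOpen (m := (⊤ : ℕ∞)) ho (by simp)).contDiffAt (ho.mem_nhds hx)).differentiableAt (by simp)
  have hsym := second_derivative_symmetric_of_eventually hev hdf.hasFDerivAt
    (Pi.single i 1) (Pi.single j 1)
  have key : ∀ a b : Fin n,
      pd a (fun y => pd b f y) x
        = (fderiv ℝ (fun y => fderiv ℝ f y) x (Pi.single a 1)) (Pi.single b 1) := by
    intro a b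
    unfold pd
    rw [fderiv_clm_apply hdf (differentiableAt_const _)]
    simp
  rw [key, key]
  exact hsym

/-! ### Matrix algebra for dev/symP -/

lemma trace_symP (X : Matrix (Fin n) (Fin n) ℝ) : Matrix.trace (symP X) = Matrix.trace X := by
  unfold symP
  rw [Matrix.trace_smul, Matrix.trace_add, Matrix.trace_transpose]
  simp; ring

lemma entry_of_dev_symP_zero {X : Matrix (Fin n) (Fin n) ℝ}
    (h : dev (symP X) = 0) (i j : Fin n) :
    X i j + X j i = 2 * (Matrix.trace X / n) * (if i = j then 1 else 0) := by
  have h2 : symP X = (Matrix.trace X / (n:ℝ)) • 1 := by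
    have := sub_eq_zero.mp h
    rw [← trace_symP X]
    exact this
  have h3 := congrFun (congrFun h2 i) j
  simp only [symP, Matrix.smul_apply, Matrix.add_apply, Matrix.transpose_apply,
    Matrix.one_apply, smul_eq_mul, mul_ite, mul_one, mul_zero] at h3
  by_cases hij : i = j <;> simp only [hij, if_true, if_false] at h3 ⊢ <;> linarith

lemma dev_symP_zero_of (hn0 : (n:ℝ) ≠ 0) {X : Matrix (Fin n) (Fin n) ℝ} {t : ℝ}
    (h : ∀ i j, X i j + X j i = 2 * t * (if i = j then 1 else 0)) : dev (symP X) = 0 := by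
  have hsym : symP X = t • (1 : Matrix (Fin n) (Fin n) ℝ) := by
    ext i j
    have := h i j
    simp only [symP, Matrix.smul_apply, Matrix.add_apply, Matrix.transpose_apply,
      Matrix.one_apply, smul_eq_mul]
    by_cases hij : i = j <;> simp only [hij, if_true, if_false] at this ⊢ <;> linarith
  unfold dev
  rw [hsym, Matrix.trace_smul, Matrix.trace_one]
  simp only [smul_eq_mul, mul_one, Fintype.card_fin]
  have hmul : t * (n:ℝ) / n = t := by field_simp
  rw [hmul, sub_self]

lemma gradM_apply (v : (Fin n → ℝ) → (Fin n → ℝ)) (x : Fin n → ℝ) (i j : Fin n) :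
    gradM v x i j = pd j (fun y => v y i) x := rfl

lemma trace_gradM (v : (Fin n → ℝ) → (Fin n → ℝ)) (x : Fin n → ℝ) :
    Matrix.trace (gradM v x) = ∑ m, pd m (fun y => v y m) x := rfl

/-! ### the model field satisfies the PDE -/

lemma pde_model (hn0 : (n:ℝ) ≠ 0) (a c : Fin n → ℝ) (M : Matrix (Fin n) (Fin n) ℝ)
    (lam : ℝ) (hM : ∀ k j, M k j + M j k = 2 * lam * (if k = j then 1 else 0))
    (x : Fin n → ℝ) :
    dev (symP (gradM (fun y k => a k + dotp (M k) y + confQ c y k) x)) = 0 := by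
  apply dev_symP_zero_of hn0 (t := lam + dotp c x)
  intro i j
  have hent : ∀ k m : Fin n, gradM (fun y k' => a k' + dotp (M k') y + confQ c y k') x k m
      = M k m + (c m * x k + dotp c x * (if k = m then 1 else 0) - x m * c k) := by
    intro k m
    rw [gradM_apply]
    have : (fun y : Fin n → ℝ => a k + dotp (M k) y + confQ c y k)
        = fun y => (a k + dotp (M k) y) + confQ c y k := rfl
    rw [this, pd_add (by fun_prop) (by fun_prop), pd_add (by fun_prop) (by fun_prop),
      pd_const, pd_dotp, pd_confQ]
    ring
  rw [hent, hent]
  have h1 := hM i j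
  have h2 : (if j = i then (1:ℝ) else 0) = if i = j then 1 else 0 := by
    by_cases h : i = j <;> simp [h]; exact fun hh => h hh.symm
  by_cases hij : i = j
  · subst hij; simp only [if_true, if_pos rfl] at h1 ⊢; nlinarith [h1]
  · have hji : ¬ j = i := fun hh => hij hh.symm
    simp only [hij, hji, if_false] at h1 ⊢; nlinarith [h1]

lemma kd_comm (a b : Fin n) : (if a = b then (1:ℝ) else 0) = if b = a then 1 else 0 := by
  by_cases h : a = b
  · simp [h]
  · rw [if_neg h, if_neg (fun hh => h hh.symm)]

lemma exists_third (hn : 3 ≤ n) (i j : Fin n) : ∃ k : Fin n, k ≠ i ∧ k ≠ j := by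
  by_contra h
  push_neg at h
  have hsub : (Finset.univ : Finset (Fin n)) ⊆ {i, j} := by
    intro k _
    by_cases hk : k = i
    · simp [hk]
    · simp [h k hk]
  have h1 : (Finset.univ : Finset (Fin n)).card ≤ ({i, j} : Finset (Fin n)).card :=
    Finset.card_le_card hsub
  have h2 : ({i, j} : Finset (Fin n)).card ≤ 2 :=
    le_trans (Finset.card_insert_le _ _) (by simp)
  simp only [Finset.card_univ, Fintype.card_fin] at h1
  omega

lemma classification (hn : 3 ≤ n) (ho : IsOpen Ω) (hconn : IsPreconnected Ω)
    {x₀ : Fin n → ℝ} (hx₀ : x₀ ∈ Ω) {v : (Fin n → ℝ) → (Fin n → ℝ)}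
    (hv : ContDiffOn ℝ (⊤ : ℕ∞) v Ω)
    (hpde : ∀ x ∈ Ω, dev (symP (gradM v x)) = 0) :
    ∃ (a c : Fin n → ℝ) (M : Matrix (Fin n) (Fin n) ℝ) (lam : ℝ),
      (∀ k j, M k j + M j k = 2 * lam * (if k = j then 1 else 0)) ∧
      ∀ x ∈ Ω, ∀ k, v x k = a k + dotp (M k) x + confQ c x k := by
  have hvk : ∀ k : Fin n, ContDiffOn ℝ (⊤ : ℕ∞) (fun y => v y k) Ω := by
    intro k
    have h := (ContinuousLinearMap.proj k :
      (Fin n → ℝ) →L[ℝ] ℝ).contDiff.comp_contDiffOn hv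
    exact h.congr (fun y _ => rfl)
  set u : Fin n → Fin n → (Fin n → ℝ) → ℝ := fun k j x => pd j (fun y => v y k) x with hu_def
  have hu : ∀ k j, ContDiffOn ℝ (⊤ : ℕ∞) (u k j) Ω := fun k j => contDiffOn_pd ho (hvk k) j
  set σf : (Fin n → ℝ) → ℝ := fun x => (∑ m, u m m x) / n with hsf_def
  have hσ : ContDiffOn ℝ (⊤ : ℕ∞) σf Ω := (ContDiffOn.sum fun m _ => hu m m).div_const _
  have hdu : ∀ k j, ∀ x ∈ Ω, DifferentiableAt ℝ (u k j) x := fun k j x hx =>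
    diffAt_of_contDiffOn ho (hu k j) hx
  have hdσ : ∀ x ∈ Ω, DifferentiableAt ℝ σf x := fun x hx => diffAt_of_contDiffOn ho hσ hx
  have hP : ∀ x ∈ Ω, ∀ k j, u k j x + u j k x = 2 * σf x * (if k = j then 1 else 0) := by
    intro x hx k j
    have h1 := entry_of_dev_symP_zero (hpde x hx) k j
    have htr : Matrix.trace (gradM v x) = ∑ m, u m m x := rfl
    rw [htr] at h1
    exact h1
  have hD : ∀ x ∈ Ω, ∀ i j k, pd i (u k j) x
      = pd i σf x * (if j = k then 1 else 0) + pd j σf x * (if i = k then 1 else 0)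
        - pd k σf x * (if i = j then 1 else 0) := by
    intro x hx i j k
    have E : ∀ a b c : Fin n, pd a (u b c) x + pd a (u c b) x
        = 2 * pd a σf x * (if b = c then 1 else 0) := by
      intro a b c
      have h1 : pd a (fun y => u b c y + u c b y) x
          = pd a (fun y => (2 * (if b = c then (1:ℝ) else 0)) * σf y) x := by
        apply pd_congr_on ho hx
        intro y hy
        rw [hP y hy b c]; ring
      rw [pd_add (hdu b c x hx) (hdu c b x hx), pd_const_mul (hdσ x hx)] at h1
      rw [h1]; ring
    have S : ∀ a b c : Fin n, pd a (u c b) x = pd b (u c a) x := fun a b c =>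
      pd_comm ho (hvk c) hx a b
    have E1 := E i k j
    have E2 := E j k i
    have E3 := E k j i
    rw [S j i k, S j k i] at E2
    rw [S k i j] at E3
    rw [kd_comm k j] at E1
    rw [kd_comm k i] at E2
    rw [kd_comm j i] at E3
    linarith [E1, E2, E3]
  have hT : ∀ x ∈ Ω, ∀ l i j k, pd l (fun y => pd i (u k j) y) x
      = pd l (fun y => pd i σf y) x * (if j = k then 1 else 0)
        + pd l (fun y => pd j σf y) x * (if i = k then 1 else 0)
        - pd l (fun y => pd k σf y) x * (if i = j then 1 else 0) := by
    intro x hx l i j k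
    have dσi : ∀ m : Fin n, DifferentiableAt ℝ (fun y => pd m σf y) x := fun m =>
      diffAt_of_contDiffOn ho (contDiffOn_pd ho hσ m) hx
    have h1 : pd l (fun y => pd i (u k j) y) x
        = pd l (fun y => ((if j = k then (1:ℝ) else 0) * pd i σf y
            + (if i = k then (1:ℝ) else 0) * pd j σf y)
            - (if i = j then (1:ℝ) else 0) * pd k σf y) x := by
      apply pd_congr_on ho hx
      intro y hy
      rw [hD y hy i j k]; ring
    rw [h1, pd_sub (f := fun y => (if j = k then (1:ℝ) else 0) * pd i σf y
        + (if i = k then (1:ℝ) else 0) * pd j σf y)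
        (g := fun y => (if i = j then (1:ℝ) else 0) * pd k σf y)
        (((dσi i).const_mul _).add ((dσi j).const_mul _)) ((dσi k).const_mul _),
      pd_add (f := fun y => (if j = k then (1:ℝ) else 0) * pd i σf y)
        (g := fun y => (if i = k then (1:ℝ) else 0) * pd j σf y)
        ((dσi i).const_mul _) ((dσi j).const_mul _),
      pd_const_mul (dσi i), pd_const_mul (dσi j), pd_const_mul (dσi k)]
    ring
  have hTsym : ∀ x ∈ Ω, ∀ l i j k, pd l (fun y => pd i (u k j) y) x
      = pd j (fun y => pd i (u k l) y) x := by
    intro x hx l i j k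
    have s1 : pd l (fun y => pd i (u k j) y) x = pd i (fun y => pd l (u k j) y) x :=
      pd_comm ho (hu k j) hx l i
    have s2 : pd i (fun y => pd l (u k j) y) x = pd i (fun y => pd j (u k l) y) x := by
      apply pd_congr_on ho hx
      intro y hy
      exact pd_comm ho (hvk k) hy l j
    have s3 : pd i (fun y => pd j (u k l) y) x = pd j (fun y => pd i (u k l) y) x :=
      pd_comm ho (hu k l) hx i j
    rw [s1, s2, s3]
  have hH : ∀ x ∈ Ω, ∀ l i, pd l (fun y => pd i σf y) x = 0 := by
    intro x hx
    set H : Fin n → Fin n → ℝ := fun l i => pd l (fun y => pd i σf y) x with hH_def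
    have master : ∀ i j k : Fin n, H j i
        = H k i * (if j = k then 1 else 0) + H k j * (if i = k then 1 else 0)
          - H k k * (if i = j then 1 else 0) := by
      intro i j k
      have h1 := hT x hx k i j k
      have h2 := hT x hx j i k k
      have h3 := hTsym x hx k i j k
      have h2' : pd j (fun y => pd i (u k k) y) x = H j i := by
        rw [h2]; simp; rfl
      rw [← h2', ← h3]
      exact h1
    have diag : ∀ i k : Fin n, i ≠ k → H i i = - H k k := by
      intro i k hik
      have hm := master i i k
      rw [if_neg hik, if_pos rfl] at hm
      linarith [hm]
    have diag0 : ∀ i, H i i = 0 := by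
      intro i
      obtain ⟨k, hki, -⟩ := exists_third hn i i
      obtain ⟨m, hmi, hmk⟩ := exists_third hn i k
      have h1 := diag i k (Ne.symm hki)
      have h2 := diag i m (Ne.symm hmi)
      have h3 := diag k m (Ne.symm hmk)
      linarith
    intro l i
    by_cases hli : l = i
    · subst hli; exact diag0 l
    · obtain ⟨k, hk1, hk2⟩ := exists_third hn i l
      have hm := master i l k
      rw [if_neg (fun hh => hk2 hh.symm), if_neg (fun hh => hk1 hh.symm),
        if_neg (fun hh => hli hh.symm)] at hm
      simpa using hm
  set c : Fin n → ℝ := fun i => pd i σf x₀ with hc_def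
  have hsconst : ∀ i : Fin n, ∀ x ∈ Ω, pd i σf x = c i := by
    intro i x hx
    exact const_on ho hconn
      (fun z hz => diffAt_of_contDiffOn ho (contDiffOn_pd ho hσ i) hz)
      (fun z hz j => hH z hz j i) hx hx₀
  have hD' : ∀ x ∈ Ω, ∀ i j k, pd i (u k j) x
      = c i * (if j = k then 1 else 0) + c j * (if i = k then 1 else 0)
        - c k * (if i = j then 1 else 0) := by
    intro x hx i j k
    rw [hD x hx i j k, hsconst i x hx, hsconst j x hx, hsconst k x hx]
  have hdQ : ∀ k j : Fin n, ∀ x : Fin n → ℝ,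
      DifferentiableAt ℝ (fun y => pd j (fun z => confQ c z k) y) x := fun k j x =>
    ((contDiff_pd_confQ c k j).differentiable (by simp)).differentiableAt
  have hg : ∀ k j : Fin n, ∀ x ∈ Ω, ∀ i : Fin n,
      pd i (fun y => u k j y - pd j (fun z => confQ c z k) y) x = 0 := by
    intro k j x hx i
    rw [pd_sub (hdu k j x hx) (hdQ k j x), hD' x hx i j k, pd_pd_confQ]
    rw [kd_comm k j, kd_comm k i]
    ring
  set M : Matrix (Fin n) (Fin n) ℝ := Matrix.of fun k j =>
    u k j x₀ - pd j (fun z => confQ c z k) x₀ with hM_def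
  have hgconst : ∀ k j : Fin n, ∀ x ∈ Ω,
      u k j x - pd j (fun z => confQ c z k) x = M k j := by
    intro k j x hx
    exact const_on ho hconn
      (fun z hz => (hdu k j z hz).sub (hdQ k j z)) (hg k j) hx hx₀
  have hw : ∀ k : Fin n, ∀ x ∈ Ω, ∀ j : Fin n,
      pd j (fun y => v y k - dotp (M k) y - confQ c y k) x = 0 := by
    intro k x hx j
    have hdvk : DifferentiableAt ℝ (fun y => v y k) x := diffAt_of_contDiffOn ho (hvk k) hx
    have e1 : (fun y => v y k - dotp (M k) y - confQ c y k)
        = fun y => (v y k - dotp (M k) y) - confQ c y k := rfl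
    rw [e1, pd_sub (f := fun y => v y k - dotp (M k) y) (hdvk.sub (diff_dotp (M k) x))
        (diff_confQ c x k),
      pd_sub hdvk (diff_dotp (M k) x), pd_dotp, pd_confQ]
    have h2 := hgconst k j x hx
    rw [pd_confQ] at h2
    have : u k j x = pd j (fun y => v y k) x := rfl
    rw [this] at h2
    linarith [h2]
  set a : Fin n → ℝ := fun k => v x₀ k - dotp (M k) x₀ - confQ c x₀ k with ha_def
  have hval : ∀ x ∈ Ω, ∀ k, v x k = a k + dotp (M k) x + confQ c x k := by
    intro x hx k
    have hcst := const_on ho hconn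
      (fun z hz => ((diffAt_of_contDiffOn ho (hvk k) hz).sub (diff_dotp (M k) z)).sub
        (diff_confQ c z k)) (hw k) hx hx₀
    have : v x k - dotp (M k) x - confQ c x k = a k := hcst
    linarith [this]
  refine ⟨a, c, M, σf x₀ - dotp c x₀, ?_, hval⟩
  intro k j
  have h1 := hP x₀ hx₀ k j
  have h2 := hgconst k j x₀ hx₀
  have h3 := hgconst j k x₀ hx₀
  rw [pd_confQ] at h2 h3
  by_cases hkj : k = j
  · subst hkj
    rw [if_pos rfl] at h1 h2 h3 ⊢
    linarith [h1, h2, h3]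
  · have hjk : ¬ j = k := fun hh => hkj hh.symm
    rw [if_neg hkj] at h1 h2 ⊢
    rw [if_neg hjk] at h3
    linarith [h1, h2, h3]


/-! ### decomposition of the linear part -/

lemma rot_decomp (M : Matrix (Fin n) (Fin n) ℝ) (lam : ℝ)
    (hM : ∀ k j, M k j + M j k = 2 * lam * (if k = j then 1 else 0))
    (x : Fin n → ℝ) (k : Fin n) :
    dotp (M k) x = lam * x k
      + ∑ p : {p : Fin n × Fin n // p.1 < p.2}, M p.1.1 p.1.2 * rotF p.1.1 p.1.2 x k := by
  have hMkk : M k k = lam := by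
    have := hM k k
    rw [if_pos rfl] at this
    linarith
  have hsum : ∑ p : {p : Fin n × Fin n // p.1 < p.2}, M p.1.1 p.1.2 * rotF p.1.1 p.1.2 x k
      = ∑ p ∈ Finset.univ.filter (fun p : Fin n × Fin n => p.1 < p.2),
          M p.1 p.2 * rotF p.1 p.2 x k :=
    (Finset.sum_subtype (p := fun p : Fin n × Fin n => p.1 < p.2)
      (Finset.univ.filter fun p : Fin n × Fin n => p.1 < p.2)
      (fun p => by simp) (fun p => M p.1 p.2 * rotF p.1 p.2 x k)).symm
  rw [hsum, Finset.sum_filter, ← Finset.univ_product_univ, Finset.sum_product]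
  have per : ∀ i j : Fin n, (if i < j then M i j * rotF i j x k else 0)
      = (if k = i then (if i < j then M i j * x j else 0) else 0)
        - (if k = j then (if i < j then M i j * x i else 0) else 0) := by
    intro i j
    by_cases h1 : i < j
    · by_cases h2 : k = i
      · by_cases h3 : k = j
        · exact absurd h1 (by rw [← h2, ← h3]; exact lt_irrefl k)
        · simp [rotF, h1, h2, h3, ne_of_lt h1, (ne_of_lt h1).symm]
      · by_cases h3 : k = j
        · simp [rotF, h1, h2, h3, ne_of_lt h1, (ne_of_lt h1).symm]
        · simp [rotF, h1, h2, h3]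
    · simp [h1]
  simp only [per]
  simp only [Finset.sum_sub_distrib]
  have hA : ∀ i : Fin n, (∑ j : Fin n, if k = i then (if i < j then M i j * x j else 0) else 0)
      = if k = i then (∑ j : Fin n, if i < j then M i j * x j else 0) else 0 := by
    intro i
    split <;> simp
  have hB : ∀ i : Fin n, (∑ j : Fin n, if k = j then (if i < j then M i j * x i else 0) else 0)
      = if i < k then M i k * x i else 0 := by
    intro i
    rw [Finset.sum_ite_eq]
    simp
  simp only [hA, hB]
  rw [Finset.sum_ite_eq]
  simp only [Finset.mem_univ, if_true]
  have hB2 : ∀ i : Fin n, (if i < k then M i k * x i else 0)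
      = -(if i < k then M k i * x i else 0) := by
    intro i
    split
    · next h =>
      have h2 := hM i k
      rw [if_neg (ne_of_lt h)] at h2
      have h3 : M i k = - M k i := by linarith
      rw [h3]; ring
    · simp
  simp only [hB2]
  have split3 : ∀ m : Fin n, M k m * x m
      = ((if k < m then M k m * x m else 0) + (if m < k then M k m * x m else 0))
        + (if m = k then M k m * x m else 0) := by
    intro m
    rcases lt_trichotomy k m with h | h | h
    · rw [if_pos h, if_neg (not_lt_of_gt h), if_neg (ne_of_gt h)]; ring
    · rw [if_neg (h ▸ lt_irrefl k), if_neg (h ▸ lt_irrefl k), if_pos h.symm]; ring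
    · rw [if_neg (not_lt_of_gt h), if_pos h, if_neg (ne_of_lt h)]; ring
  have lhs_eq : dotp (M k) x
      = ((∑ m : Fin n, if k < m then M k m * x m else 0)
          + (∑ m : Fin n, if m < k then M k m * x m else 0))
        + (∑ m : Fin n, if m = k then M k m * x m else 0) := by
    unfold dotp
    rw [← Finset.sum_add_distrib, ← Finset.sum_add_distrib]
    exact Finset.sum_congr rfl fun m _ => split3 m
  rw [lhs_eq, Finset.sum_ite_eq']
  simp only [Finset.mem_univ, if_true, hMkk]
  rw [Finset.sum_neg_distrib]
  ring

/-! ### small algebra -/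

lemma dotp_single (m : Fin n) (y : Fin n → ℝ) : dotp (Pi.single m 1) y = y m := by
  unfold dotp
  rw [Finset.sum_eq_single m]
  · simp
  · intro b _ hb; simp [Pi.single_apply, hb]
  · intro h; exact absurd (Finset.mem_univ m) h

lemma sq2_single (k : Fin n) : sq2 (Pi.single k 1 : Fin n → ℝ) = 1 := by
  unfold sq2
  rw [Finset.sum_eq_single k]
  · simp
  · intro b _ hb; simp [Pi.single_apply, hb]
  · intro h; exact absurd (Finset.mem_univ k) h

lemma dotp_single_right (c : Fin n → ℝ) (k : Fin n) : dotp c (Pi.single k 1) = c k := by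
  unfold dotp
  rw [Finset.sum_eq_single k]
  · simp
  · intro b _ hb; simp [Pi.single_apply, hb]
  · intro h; exact absurd (Finset.mem_univ k) h

lemma confQ_lin (c y : Fin n → ℝ) (k : Fin n) :
    ∑ m, c m * confQ (Pi.single m 1) y k = confQ c y k := by
  have per : ∀ m : Fin n, c m * confQ (Pi.single m 1) y k
      = c m * y m * y k - (1 / 2 * sq2 y) * (if k = m then c m else 0) := by
    intro m
    unfold confQ
    rw [dotp_single, Pi.single_apply]
    by_cases h : k = m <;> simp [h] <;> ring
  rw [Finset.sum_congr rfl (fun m _ => per m), Finset.sum_sub_distrib,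
    ← Finset.sum_mul, ← Finset.mul_sum, Finset.sum_ite_eq]
  simp only [Finset.mem_univ, if_true]
  unfold confQ dotp
  ring

lemma confQ_zero (y : Fin n → ℝ) (k : Fin n) : confQ 0 y k = 0 := by
  unfold confQ dotp
  simp

lemma dotp_zero_row (y : Fin n → ℝ) : dotp (0 : Fin n → ℝ) y = 0 := by
  unfold dotp; simp

lemma rotF_lin (i j : Fin n) (x z : Fin n → ℝ) (t : ℝ) (k : Fin n) :
    rotF i j (x + t • z) k = rotF i j x k + t * rotF i j z k := by
  unfold rotF
  have hj : (x + t • z) j = x j + t * z j := by simp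
  have hi : (x + t • z) i = x i + t * z i := by simp
  by_cases h1 : k = i
  · by_cases h2 : k = j
    · simp only [if_pos h1, if_pos h2, hi, hj]; ring
    · simp only [if_pos h1, if_neg h2, hj]; ring
  · by_cases h2 : k = j
    · simp only [if_neg h1, if_pos h2, hi]; ring
    · simp only [if_neg h1, if_neg h2]; ring

lemma vanish_params {x₀ : Fin n → ℝ} {ε : ℝ} (hε : 0 < ε) (a c : Fin n → ℝ)
    (L : (Fin n → ℝ) → (Fin n → ℝ))
    (hL : ∀ (x z : Fin n → ℝ) (t : ℝ) (k : Fin n), L (x + t • z) k = L x k + t * L z k)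
    (hvan : ∀ x ∈ Metric.ball x₀ ε, ∀ k, a k + L x k + confQ c x k = 0) :
    c = 0 ∧ (∀ z k, L z k = 0) ∧ a = 0 := by
  have hx₀ : x₀ ∈ Metric.ball x₀ ε := Metric.mem_ball_self hε
  have hmem : ∀ (z : Fin n → ℝ) (t : ℝ), |t| * ‖z‖ < ε → x₀ + t • z ∈ Metric.ball x₀ ε := by
    intro z t ht
    rw [Metric.mem_ball, dist_eq_norm, add_sub_cancel_left, norm_smul, Real.norm_eq_abs]
    exact ht
  have key : ∀ (z : Fin n → ℝ) (k : Fin n),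
      confQ c z k = 0 ∧ (L z k + (dotp c z * x₀ k + dotp c x₀ * z k - dotp x₀ z * c k)) = 0 := by
    intro z k
    set t₁ : ℝ := ε / (2 * (‖z‖ + 1)) with ht₁_def
    have hz1 : (0:ℝ) < ‖z‖ + 1 := by positivity
    have ht₁ : 0 < t₁ := div_pos hε (by positivity)
    have hmem1 : ∀ s : ℝ, |s| = t₁ → x₀ + s • z ∈ Metric.ball x₀ ε := by
      intro s hs
      apply hmem
      rw [hs]
      have hnn : 0 ≤ ‖z‖ := norm_nonneg z
      have hne : (‖z‖ + 1) ≠ 0 := ne_of_gt hz1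
      have he : t₁ * (‖z‖ + 1) = ε / 2 := by
        rw [ht₁_def]
        field_simp
      calc t₁ * ‖z‖ ≤ t₁ * (‖z‖ + 1) := by nlinarith [ht₁]
        _ = ε / 2 := he
        _ < ε := by linarith
    have hψ : ∀ s : ℝ, |s| = t₁ →
        (a k + L x₀ k + confQ c x₀ k)
          + s * (L z k + (dotp c z * x₀ k + dotp c x₀ * z k - dotp x₀ z * c k))
          + s ^ 2 * confQ c z k = 0 := by
      intro s hs
      have h1 := hvan _ (hmem1 s hs) k
      rw [hL x₀ z s k, confQ_expand c x₀ z s k] at h1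
      linear_combination h1
    have h0 : a k + L x₀ k + confQ c x₀ k = 0 := hvan x₀ hx₀ k
    have hp := hψ t₁ (abs_of_pos ht₁)
    have hm := hψ (-t₁) (by rw [abs_neg, abs_of_pos ht₁])
    have hγ : confQ c z k = 0 := by
      have h6 : t₁ ^ 2 * confQ c z k = 0 := by
        linear_combination (hp + hm) / 2 - h0
      rcases mul_eq_zero.mp h6 with h | h
      · exact absurd h (pow_ne_zero 2 (ne_of_gt ht₁))
      · exact h
    have hβ : L z k + (dotp c z * x₀ k + dotp c x₀ * z k - dotp x₀ z * c k) = 0 := by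
      have h5 : t₁ * (L z k + (dotp c z * x₀ k + dotp c x₀ * z k - dotp x₀ z * c k)) = 0 := by
        linear_combination (hp - hm) / 2
      rcases mul_eq_zero.mp h5 with h | h
      · exact absurd h (ne_of_gt ht₁)
      · exact h
    exact ⟨hγ, hβ⟩
  have hc : c = 0 := by
    funext k
    have hk := (key (Pi.single k 1) k).1
    unfold confQ at hk
    rw [dotp_single_right, sq2_single] at hk
    simp only [Pi.single_eq_same, Pi.zero_apply] at hk ⊢
    linarith [hk]
  have hLz : ∀ z k, L z k = 0 := by
    intro z k
    have hk := (key z k).2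
    rw [hc, dotp_zero_row, dotp_zero_row] at hk
    simp only [Pi.zero_apply, zero_mul, mul_zero, sub_zero, add_zero, zero_add] at hk
    simpa using hk
  refine ⟨hc, hLz, ?_⟩
  funext k
  have h0 := hvan x₀ hx₀ k
  rw [hc, confQ_zero, hLz x₀ k] at h0
  simpa using h0

/-! ### closure algebra -/

lemma contDiffOn_comp {Ω : Set (Fin n → ℝ)} {v : (Fin n → ℝ) → (Fin n → ℝ)}
    (hv : ContDiffOn ℝ (⊤ : ℕ∞) v Ω) (k : Fin n) : ContDiffOn ℝ (⊤ : ℕ∞) (fun y => v y k) Ω := by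
  have h := (ContinuousLinearMap.proj k : (Fin n → ℝ) →L[ℝ] ℝ).contDiff.comp_contDiffOn hv
  exact h.congr (fun y _ => rfl)

lemma symP_add (A B : Matrix (Fin n) (Fin n) ℝ) : symP (A + B) = symP A + symP B := by
  ext i j
  simp [symP, Matrix.add_apply, Matrix.transpose_apply]
  ring

lemma symP_smul (r : ℝ) (A : Matrix (Fin n) (Fin n) ℝ) : symP (r • A) = r • symP A := by
  ext i j
  simp [symP, Matrix.add_apply, Matrix.transpose_apply, smul_eq_mul]
  ring

lemma dev_symP_eq (X : Matrix (Fin n) (Fin n) ℝ) :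
    dev (symP X) = symP X - (Matrix.trace X / (n:ℝ)) • 1 := by
  unfold dev
  rw [trace_symP]

lemma dev_symP_add (A B : Matrix (Fin n) (Fin n) ℝ) :
    dev (symP (A + B)) = dev (symP A) + dev (symP B) := by
  rw [dev_symP_eq, dev_symP_eq, dev_symP_eq, symP_add, Matrix.trace_add, add_div, add_smul]
  abel

lemma dev_symP_smul (r : ℝ) (A : Matrix (Fin n) (Fin n) ℝ) :
    dev (symP (r • A)) = r • dev (symP A) := by
  rw [dev_symP_eq, dev_symP_eq, symP_smul, Matrix.trace_smul, smul_sub, smul_smul]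
  have : (r • Matrix.trace A) / (n:ℝ) = r * (Matrix.trace A / n) := by
    rw [smul_eq_mul, mul_div_assoc]
  rw [this]

lemma dev_symP_zero_mat : dev (symP (0 : Matrix (Fin n) (Fin n) ℝ)) = 0 := by
  unfold dev symP
  simp

/-! ### the basis fields are in model form -/

lemma dotp_rotM (i j : Fin n) (y : Fin n → ℝ) (k : Fin n) :
    dotp (fun m => (if k = i then (if m = j then (1:ℝ) else 0) else 0)
      - (if k = j then (if m = i then (1:ℝ) else 0) else 0)) y = rotF i j y k := by
  unfold dotp rotF
  have per : ∀ m : Fin n,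
      ((if k = i then (if m = j then (1:ℝ) else 0) else 0)
        - (if k = j then (if m = i then (1:ℝ) else 0) else 0)) * y m
      = (if k = i then (if m = j then y m else 0) else 0)
        - (if k = j then (if m = i then y m else 0) else 0) := by
    intro m
    split_ifs <;> ring
  rw [Finset.sum_congr rfl (fun m _ => per m), Finset.sum_sub_distrib]
  congr 1
  · split
    · rw [Finset.sum_ite_eq']; simp
    · simp
  · split
    · rw [Finset.sum_ite_eq']; simp
    · simp

lemma rotM_skew (i j k m : Fin n) :
    ((if k = i then (if m = j then (1:ℝ) else 0) else 0)
      - (if k = j then (if m = i then (1:ℝ) else 0) else 0))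
    + ((if m = i then (if k = j then (1:ℝ) else 0) else 0)
      - (if m = j then (if k = i then (1:ℝ) else 0) else 0)) = 0 := by
  split_ifs <;> ring

lemma dotp_one_row (k : Fin n) (y : Fin n → ℝ) :
    dotp ((1 : Matrix (Fin n) (Fin n) ℝ) k) y = y k := by
  unfold dotp
  have per : ∀ m : Fin n, (1 : Matrix (Fin n) (Fin n) ℝ) k m * y m
      = if k = m then y m else 0 := by
    intro m
    rw [Matrix.one_apply]
    split <;> simp
  rw [Finset.sum_congr rfl (fun m _ => per m), Finset.sum_ite_eq]
  simp

lemma contDiff_model (a c : Fin n → ℝ) (M : Matrix (Fin n) (Fin n) ℝ) :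
    ContDiff ℝ (⊤ : ℕ∞) (fun y k => a k + dotp (M k) y + confQ c y k) := by
  rw [contDiff_pi]
  intro k
  exact (contDiff_const.add (contDiff_dotp (M k))).add (contDiff_confQ c k)

/-! ### pair counting -/

lemma two_mul_card_pairs :
    2 * Fintype.card {p : Fin n × Fin n // p.1 < p.2} + n = n * n := by
  classical
  rw [Fintype.card_subtype]
  set s1 := Finset.univ.filter (fun p : Fin n × Fin n => p.1 < p.2) with hs1
  set s2 := Finset.univ.filter (fun p : Fin n × Fin n => p.2 < p.1) with hs2
  set s3 := Finset.univ.filter (fun p : Fin n × Fin n => p.1 = p.2) with hs3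
  have h12 : s1.card = s2.card := by
    apply Finset.card_bij (fun p _ => Prod.swap p)
    · intro p hp
      simp only [hs1, hs2, Finset.mem_filter, Finset.mem_univ, true_and] at hp ⊢
      exact hp
    · intro p _ q _ h
      exact Prod.swap_injective h
    · intro p hp
      refine ⟨Prod.swap p, ?_, by simp⟩
      simp only [hs1, hs2, Finset.mem_filter, Finset.mem_univ, true_and] at hp ⊢
      exact hp
  have h3 : s3.card = n := by
    have himg : s3 = Finset.image (fun i : Fin n => (i, i)) Finset.univ := by
      ext p
      simp only [hs3, Finset.mem_filter, Finset.mem_univ, true_and, Finset.mem_image]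
      constructor
      · intro h
        exact ⟨p.1, by rw [Prod.ext_iff]; exact ⟨rfl, h⟩⟩
      · rintro ⟨i, hi⟩
        rw [← hi]
    rw [himg, Finset.card_image_of_injective _ (fun a b h => (Prod.ext_iff.mp h).1)]
    simp
  have hneg : Finset.univ.filter (fun p : Fin n × Fin n => ¬ p.1 < p.2) = s2 ∪ s3 := by
    ext p
    simp only [hs2, hs3, Finset.mem_filter, Finset.mem_univ, true_and, Finset.mem_union,
      not_lt]
    constructor
    · intro h
      rcases lt_or_eq_of_le h with h' | h'
      · exact Or.inl h'
      · exact Or.inr h'.symm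
    · intro h
      rcases h with h | h
      · exact le_of_lt h
      · exact le_of_eq h.symm
  have hdisj : Disjoint s2 s3 := by
    rw [Finset.disjoint_left]
    intro p hp2 hp3
    simp only [hs2, Finset.mem_filter] at hp2
    simp only [hs3, Finset.mem_filter] at hp3
    exact absurd hp3.2 (ne_of_gt hp2.2)
  have hsplit := Finset.card_filter_add_card_filter_not
    (s := (Finset.univ : Finset (Fin n × Fin n))) (p := fun p => p.1 < p.2)
  rw [hneg, Finset.card_union_of_disjoint hdisj, h3, ← h12] at hsplit
  have huniv : (Finset.univ : Finset (Fin n × Fin n)).card = n * n := by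
    simp [Finset.card_univ]
  rw [huniv] at hsplit
  rw [two_mul, add_assoc]
  exact hsplit

/-! ### the basis family -/

def bas (n : ℕ) (Ω : Set (Fin n → ℝ)) :
    (Fin n ⊕ ({p : Fin n × Fin n // p.1 < p.2} ⊕ (Unit ⊕ Fin n))) → ((↥Ω) → (Fin n → ℝ))
  | Sum.inl k => fun _ => Pi.single k 1
  | Sum.inr (Sum.inl p) => fun x => rotF p.1.1 p.1.2 ↑x
  | Sum.inr (Sum.inr (Sum.inl _)) => fun x => (↑x : Fin n → ℝ)
  | Sum.inr (Sum.inr (Sum.inr k)) => fun x => confQ (Pi.single k 1) ↑x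


lemma rot_eval_zero {i0 j0 b1 b2 : Fin n} (hb : b1 < b2) (hij : i0 < j0)
    (hne : ¬(b1 = i0 ∧ b2 = j0)) :
    rotF b1 b2 (Pi.single j0 1) i0 = 0 := by
  unfold rotF
  rw [Pi.single_apply, Pi.single_apply]
  by_cases h1 : i0 = b1
  · by_cases h2 : b2 = j0
    · exact absurd ⟨h1.symm, h2⟩ hne
    · rw [if_pos h1, if_neg h2]
      have hlt : i0 < b2 := by rw [h1]; exact hb
      rw [if_neg (ne_of_lt hlt)]
      simp
  · rw [if_neg h1]
    by_cases h3 : i0 = b2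
    · by_cases h4 : b1 = j0
      · exfalso
        have h5 : j0 < b2 := by rw [← h4]; exact hb
        have h6 : j0 < i0 := by rw [h3]; exact h5
        exact absurd h6 (not_lt_of_gt hij)
      · rw [if_pos h3, if_neg h4]
        simp
    · rw [if_neg h3]
      simp

lemma rot_eval_diag_zero {b1 b2 k0 : Fin n} (hb : b1 < b2) :
    rotF b1 b2 (Pi.single k0 1) k0 = 0 := by
  unfold rotF
  rw [Pi.single_apply, Pi.single_apply]
  by_cases h1 : k0 = b1
  · rw [if_pos h1]
    have hne : b2 ≠ k0 := by
      intro hh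
      exact absurd hb (by rw [hh, h1]; exact lt_irrefl b1)
    rw [if_neg hne]
    have hk2 : k0 ≠ b2 := by rw [h1]; exact ne_of_lt hb
    rw [if_neg hk2]
    simp
  · rw [if_neg h1]
    by_cases h2 : k0 = b2
    · have hne : b1 ≠ k0 := by rw [h2]; exact ne_of_lt hb
      rw [if_pos h2, if_neg hne]
      simp
    · rw [if_neg h2]
      simp

lemma one_skew (k j : Fin n) : (1 : Matrix (Fin n) (Fin n) ℝ) k j
    + (1 : Matrix (Fin n) (Fin n) ℝ) j k = 2 * 1 * (if k = j then 1 else 0) := by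
  rw [Matrix.one_apply, Matrix.one_apply]
  by_cases h : k = j
  · rw [if_pos h, if_pos h.symm]; norm_num
  · rw [if_neg h, if_neg (fun hh => h hh.symm)]; norm_num

lemma trans_sum (a : Fin n → ℝ) (k : Fin n) :
    ∑ k' : Fin n, a k' * (Pi.single k' 1 : Fin n → ℝ) k = a k := by
  have per : ∀ k' : Fin n, a k' * (Pi.single k' 1 : Fin n → ℝ) k
      = if k = k' then a k' else 0 := by
    intro k'
    rw [Pi.single_apply]
    split <;> simp
  rw [Finset.sum_congr rfl (fun k' _ => per k'), Finset.sum_ite_eq]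
  simp

end CKaux

open CKaux

/-- The kernel of dev sym Grad (the space of conformal Killing vector fields on a
connected open set Ω ⊆ ℝⁿ, n ≥ 3, realized as functions on Ω) has dimension
(n+1)(n+2)/2. -/
theorem conformal_killing_finrank (n : ℕ) (hn : 3 ≤ n)
    (Ω : Set (Fin n → ℝ)) (hne : Ω.Nonempty) (ho : IsOpen Ω) (hconn : IsConnected Ω) :
    ∃ K : Submodule ℝ ((↥Ω) → (Fin n → ℝ)),
      (K : Set ((↥Ω) → (Fin n → ℝ))) =
        { f | ∃ v : (Fin n → ℝ) → (Fin n → ℝ),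
                ContDiffOn ℝ (⊤ : ℕ∞) v Ω ∧ (∀ x ∈ Ω, dev (symP (gradM v x)) = 0) ∧
                ∀ x : ↥Ω, f x = v ↑x } ∧
      FiniteDimensional ℝ K ∧
      Module.finrank ℝ K = (n + 1) * (n + 2) / 2 := by
  classical
  obtain ⟨x₀, hx₀⟩ := hne
  have hn0 : (n:ℝ) ≠ 0 := Nat.cast_ne_zero.mpr (by omega)
  let K : Submodule ℝ ((↥Ω) → (Fin n → ℝ)) :=
    { carrier := { f | ∃ v : (Fin n → ℝ) → (Fin n → ℝ),
          ContDiffOn ℝ (⊤ : ℕ∞) v Ω ∧ (∀ x ∈ Ω, dev (symP (gradM v x)) = 0) ∧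
          ∀ x : ↥Ω, f x = v ↑x }
      add_mem' := by
        rintro f g ⟨v, hv, hpv, hfv⟩ ⟨w, hw, hpw, hgw⟩
        refine ⟨fun y => v y + w y, hv.add hw, ?_, ?_⟩
        · intro x hx
          have hgadd : gradM (fun y => v y + w y) x = gradM v x + gradM w x := by
            ext i j
            show pd j (fun y => (v y + w y) i) x = _
            have e1 : (fun y => (v y + w y) i) = fun y => v y i + w y i := rfl
            rw [e1, pd_add (diffAt_of_contDiffOn ho (contDiffOn_comp hv i) hx)
              (diffAt_of_contDiffOn ho (contDiffOn_comp hw i) hx)]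
            rfl
          rw [hgadd, dev_symP_add, hpv x hx, hpw x hx, add_zero]
        · intro x
          rw [Pi.add_apply, hfv x, hgw x]
      zero_mem' := by
        refine ⟨fun _ => 0, contDiffOn_const, ?_, fun x => rfl⟩
        intro x hx
        have hz : gradM (fun _ => (0 : Fin n → ℝ)) x = 0 := by
          ext i j
          show pd j (fun _ => (0 : Fin n → ℝ) i) x = _
          rw [pd_const]
          rfl
        rw [hz, dev_symP_zero_mat]
      smul_mem' := by
        rintro r f ⟨v, hv, hpv, hfv⟩
        refine ⟨fun y => r • v y, hv.const_smul r, ?_, ?_⟩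
        · intro x hx
          have hgs : gradM (fun y => r • v y) x = r • gradM v x := by
            ext i j
            show pd j (fun y => (r • v y) i) x = _
            have e1 : (fun y => (r • v y) i) = fun y => r * v y i := rfl
            rw [e1, pd_const_mul (diffAt_of_contDiffOn ho (contDiffOn_comp hv i) hx)]
            rfl
          rw [hgs, dev_symP_smul, hpv x hx, smul_zero]
        · intro x
          rw [Pi.smul_apply, hfv x] }
  -- every basis field belongs to K
  have hmem : ∀ i, bas n Ω i ∈ K := by
    rintro (k | p | u | k)
    · refine ⟨fun y k' => (Pi.single k 1 : Fin n → ℝ) k'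
          + dotp ((0 : Matrix (Fin n) (Fin n) ℝ) k') y + confQ 0 y k',
        (contDiff_model _ _ _).contDiffOn,
        fun x _ => pde_model hn0 _ _ _ 0 (fun k' j => by simp) x, ?_⟩
      intro x
      funext k'
      show (Pi.single k 1 : Fin n → ℝ) k' = (Pi.single k 1 : Fin n → ℝ) k'
        + dotp ((0 : Matrix (Fin n) (Fin n) ℝ) k') (↑x : Fin n → ℝ) + confQ 0 (↑x) k'
      rw [confQ_zero]
      have h0 : dotp ((0 : Matrix (Fin n) (Fin n) ℝ) k') (↑x : Fin n → ℝ) = 0 := by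
        unfold dotp
        simp
      rw [h0]
      ring
    · obtain ⟨⟨i0, j0⟩, hp⟩ := p
      refine ⟨fun y k' => (0 : Fin n → ℝ) k'
          + dotp ((Matrix.of fun k' m => (if k' = i0 then (if m = j0 then (1:ℝ) else 0) else 0)
              - (if k' = j0 then (if m = i0 then (1:ℝ) else 0) else 0)) k') y + confQ 0 y k',
        (contDiff_model _ _ _).contDiffOn,
        fun x _ => pde_model hn0 _ _ _ 0
          (fun k' m => by simpa using rotM_skew i0 j0 k' m) x, ?_⟩
      intro x
      funext k'
      show rotF i0 j0 (↑x) k' = (0 : Fin n → ℝ) k'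
        + dotp ((Matrix.of fun k' m => (if k' = i0 then (if m = j0 then (1:ℝ) else 0) else 0)
            - (if k' = j0 then (if m = i0 then (1:ℝ) else 0) else 0)) k') (↑x : Fin n → ℝ)
        + confQ 0 (↑x) k'
      rw [confQ_zero]
      have h0 : dotp ((Matrix.of fun k' m => (if k' = i0 then (if m = j0 then (1:ℝ) else 0) else 0)
          - (if k' = j0 then (if m = i0 then (1:ℝ) else 0) else 0)) k') (↑x : Fin n → ℝ)
          = rotF i0 j0 (↑x) k' := dotp_rotM i0 j0 (↑x) k'
      rw [h0]
      simp
    · refine ⟨fun y k' => (0 : Fin n → ℝ) k'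
          + dotp ((1 : Matrix (Fin n) (Fin n) ℝ) k') y + confQ 0 y k',
        (contDiff_model _ _ _).contDiffOn,
        fun x _ => pde_model hn0 _ _ _ 1 one_skew x, ?_⟩
      intro x
      funext k'
      show (↑x : Fin n → ℝ) k' = (0 : Fin n → ℝ) k'
        + dotp ((1 : Matrix (Fin n) (Fin n) ℝ) k') (↑x : Fin n → ℝ) + confQ 0 (↑x) k'
      rw [confQ_zero, dotp_one_row]
      simp
    · refine ⟨fun y k' => (0 : Fin n → ℝ) k'
          + dotp ((0 : Matrix (Fin n) (Fin n) ℝ) k') y + confQ (Pi.single k 1) y k',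
        (contDiff_model _ _ _).contDiffOn,
        fun x _ => pde_model hn0 _ _ _ 0 (fun k' j => by simp) x, ?_⟩
      intro x
      funext k'
      show confQ (Pi.single k 1) (↑x) k' = (0 : Fin n → ℝ) k'
        + dotp ((0 : Matrix (Fin n) (Fin n) ℝ) k') (↑x : Fin n → ℝ)
        + confQ (Pi.single k 1) (↑x) k'
      have h0 : dotp ((0 : Matrix (Fin n) (Fin n) ℝ) k') (↑x : Fin n → ℝ) = 0 := by
        unfold dotp
        simp
      rw [h0]
      simp
  have hsub : Submodule.span ℝ (Set.range (bas n Ω)) ≤ K :=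
    Submodule.span_le.mpr (by rintro f ⟨i, rfl⟩; exact hmem i)
  have hKle : K ≤ Submodule.span ℝ (Set.range (bas n Ω)) := by
    rintro f ⟨v, hv, hpde, hfv⟩
    obtain ⟨a, c, M, lam, hM, hval⟩ :=
      classification hn ho hconn.isPreconnected hx₀ hv hpde
    have hf_eq : f = (∑ k, a k • bas n Ω (Sum.inl k))
        + ((∑ p : {p : Fin n × Fin n // p.1 < p.2},
              M p.1.1 p.1.2 • bas n Ω (Sum.inr (Sum.inl p)))
          + (lam • bas n Ω (Sum.inr (Sum.inr (Sum.inl ())))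
            + ∑ k, c k • bas n Ω (Sum.inr (Sum.inr (Sum.inr k))))) := by
      funext x
      funext k
      have h1 : f x = v ↑x := hfv x
      rw [h1]
      rw [hval ↑x x.2 k]
      simp only [Pi.add_apply, Finset.sum_apply, Pi.smul_apply, smul_eq_mul, bas]
      rw [trans_sum a k, confQ_lin c (↑x) k, rot_decomp M lam hM (↑x) k]
      ring
    rw [hf_eq]
    refine Submodule.add_mem _
      (Submodule.sum_mem _ fun k _ => Submodule.smul_mem _ _
        (Submodule.subset_span ⟨_, rfl⟩))
      (Submodule.add_mem _
        (Submodule.sum_mem _ fun p _ => Submodule.smul_mem _ _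
          (Submodule.subset_span ⟨_, rfl⟩))
        (Submodule.add_mem _
          (Submodule.smul_mem _ _ (Submodule.subset_span ⟨_, rfl⟩))
          (Submodule.sum_mem _ fun k _ => Submodule.smul_mem _ _
            (Submodule.subset_span ⟨_, rfl⟩))))
  have hEq : K = Submodule.span ℝ (Set.range (bas n Ω)) := le_antisymm hKle hsub
  -- linear independence
  have hli : LinearIndependent ℝ (bas n Ω) := by
    rw [Fintype.linearIndependent_iff]
    intro g hg
    obtain ⟨ε, hε, hball⟩ := Metric.isOpen_iff.mp ho x₀ hx₀
    have hvan : ∀ x ∈ Metric.ball x₀ ε, ∀ k : Fin n,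
        g (Sum.inl k)
          + (g (Sum.inr (Sum.inr (Sum.inl ()))) * x k
              + ∑ p : {p : Fin n × Fin n // p.1 < p.2},
                  g (Sum.inr (Sum.inl p)) * rotF p.1.1 p.1.2 x k)
          + confQ (fun k' => g (Sum.inr (Sum.inr (Sum.inr k')))) x k = 0 := by
      intro x hx k
      have h1 := congrFun (congrFun hg ⟨x, hball hx⟩) k
      simp only [Finset.sum_apply, Pi.smul_apply, smul_eq_mul, Pi.zero_apply,
        Fintype.sum_sum_type, bas] at h1
      have hunit : ∑ u : Unit, g (Sum.inr (Sum.inr (Sum.inl u))) * x k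
          = g (Sum.inr (Sum.inr (Sum.inl ()))) * x k := by simp
      have htr : ∑ k' : Fin n, g (Sum.inl k') * (Pi.single k' 1 : Fin n → ℝ) k
          = g (Sum.inl k) := trans_sum _ k
      have hcf : ∑ k' : Fin n, g (Sum.inr (Sum.inr (Sum.inr k')))
            * confQ (Pi.single k' 1) x k
          = confQ (fun k' => g (Sum.inr (Sum.inr (Sum.inr k')))) x k := confQ_lin _ x k
      rw [htr] at h1
      rw [hcf] at h1
      rw [hunit] at h1
      linarith [h1]
    have hLlin : ∀ (x z : Fin n → ℝ) (t : ℝ) (k : Fin n),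
        g (Sum.inr (Sum.inr (Sum.inl ()))) * (x + t • z) k
          + ∑ p : {p : Fin n × Fin n // p.1 < p.2},
              g (Sum.inr (Sum.inl p)) * rotF p.1.1 p.1.2 (x + t • z) k
        = (g (Sum.inr (Sum.inr (Sum.inl ()))) * x k
            + ∑ p : {p : Fin n × Fin n // p.1 < p.2},
                g (Sum.inr (Sum.inl p)) * rotF p.1.1 p.1.2 x k)
          + t * (g (Sum.inr (Sum.inr (Sum.inl ()))) * z k
            + ∑ p : {p : Fin n × Fin n // p.1 < p.2},
                g (Sum.inr (Sum.inl p)) * rotF p.1.1 p.1.2 z k) := by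
      intro x z t k
      have hxk : (x + t • z) k = x k + t * z k := by simp
      rw [hxk]
      have per : ∀ p : {p : Fin n × Fin n // p.1 < p.2},
          g (Sum.inr (Sum.inl p)) * rotF p.1.1 p.1.2 (x + t • z) k
          = g (Sum.inr (Sum.inl p)) * rotF p.1.1 p.1.2 x k
            + t * (g (Sum.inr (Sum.inl p)) * rotF p.1.1 p.1.2 z k) := by
        intro p
        rw [rotF_lin]
        ring
      rw [Finset.sum_congr rfl (fun p _ => per p), Finset.sum_add_distrib, ← Finset.mul_sum]
      ring
    obtain ⟨hc0, hL0, ha0⟩ := vanish_params hε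
      (fun k' => g (Sum.inl k'))
      (fun k' => g (Sum.inr (Sum.inr (Sum.inr k'))))
      (fun y k' => g (Sum.inr (Sum.inr (Sum.inl ()))) * y k'
        + ∑ p : {p : Fin n × Fin n // p.1 < p.2},
            g (Sum.inr (Sum.inl p)) * rotF p.1.1 p.1.2 y k')
      hLlin hvan
    have hlam : g (Sum.inr (Sum.inr (Sum.inl ()))) = 0 := by
      let k0 : Fin n := ⟨0, by omega⟩
      have h : g (Sum.inr (Sum.inr (Sum.inl ()))) * (Pi.single k0 1 : Fin n → ℝ) k0
          + ∑ p : {p : Fin n × Fin n // p.1 < p.2},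
              g (Sum.inr (Sum.inl p)) * rotF p.1.1 p.1.2 (Pi.single k0 1) k0 = 0 :=
        hL0 (Pi.single k0 1) k0
      have hs : ∑ p : {p : Fin n × Fin n // p.1 < p.2},
          g (Sum.inr (Sum.inl p)) * rotF p.1.1 p.1.2 (Pi.single k0 1) k0 = 0 := by
        apply Finset.sum_eq_zero
        intro p _
        rw [rot_eval_diag_zero p.2]
        ring
      rw [hs, Pi.single_eq_same] at h
      simpa using h
    rintro (k | p | u | k)
    · exact congrFun ha0 k
    · obtain ⟨⟨i0, j0⟩, hp⟩ := p
      have h : g (Sum.inr (Sum.inr (Sum.inl ()))) * (Pi.single j0 1 : Fin n → ℝ) i0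
          + ∑ p' : {p : Fin n × Fin n // p.1 < p.2},
              g (Sum.inr (Sum.inl p')) * rotF p'.1.1 p'.1.2 (Pi.single j0 1) i0 = 0 :=
        hL0 (Pi.single j0 1) i0
      have hs : ∑ p' : {p : Fin n × Fin n // p.1 < p.2},
          g (Sum.inr (Sum.inl p')) * rotF p'.1.1 p'.1.2 (Pi.single j0 1) i0
          = g (Sum.inr (Sum.inl ⟨(i0, j0), hp⟩)) := by
        rw [Finset.sum_eq_single (⟨(i0, j0), hp⟩ : {p : Fin n × Fin n // p.1 < p.2})]
        · show _ * rotF i0 j0 (Pi.single j0 1) i0 = _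
          unfold rotF
          rw [if_pos rfl, if_neg (ne_of_lt hp), Pi.single_eq_same]
          ring
        · intro b _ hb
          obtain ⟨⟨b1, b2⟩, hb'⟩ := b
          have hne : ¬(b1 = i0 ∧ b2 = j0) := by
            rintro ⟨h1, h2⟩
            exact hb (Subtype.ext (Prod.ext_iff.mpr ⟨h1, h2⟩))
          rw [rot_eval_zero hb' hp hne]
          ring
        · intro hmem'
          exact absurd (Finset.mem_univ _) hmem'
      rw [hs, hlam, Pi.single_apply, if_neg (ne_of_lt hp)] at h
      simpa using h
    · cases u
      exact hlam
    · exact congrFun hc0 k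
  refine ⟨K, rfl, ?_, ?_⟩
  · rw [hEq]
    exact FiniteDimensional.span_of_finite ℝ (Set.finite_range _)
  · rw [hEq, finrank_span_eq_card hli]
    have hcard : Fintype.card
        (Fin n ⊕ ({p : Fin n × Fin n // p.1 < p.2} ⊕ (Unit ⊕ Fin n)))
        = n + (Fintype.card {p : Fin n × Fin n // p.1 < p.2} + (1 + n)) := by
      simp
    rw [hcard]
    have hP := two_mul_card_pairs (n := n)
    set P := Fintype.card {p : Fin n × Fin n // p.1 < p.2} with hPdef
    have h2 : (n + 1) * (n + 2) = 2 * (n + (P + (1 + n))) := by nlinarith [hP]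
    rw [h2, Nat.mul_div_cancel_left _ (by norm_num : 0 < 2)]
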